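/- arXiv:1108.3364 — 2 statements merged into one kernel-verified Lean document; each statement's English description precedes it below -/
import Mathlib

section
/- Under the isomorphisms δ_χ : Γ/χ(L*) ≅ H^1(G_k, M) and δ_p : L*/(L*)^p ≅ H^1(G_k, μ_p(L^sep)), the map δ_χ induces an isomorphism from Γ/χ(L*)ι(k*) onto the image of H^1(G_k, M) in H^1(G_k, M/μ_p), and δ_p induces an isomorphism from L*/(L*)^p k* onto the image of H^1(G_k, μ_p(L^sep)) in H^1(G_k, μ_p(L^sep)/μ_p). -/
/-!
Read `A = (L^sep)*`, `B = (k^sep)*`, `Γs = Γ^sep`, `μ = μ_p(k^sep)`; a class in `H¹(G, M/μ_p)` is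
represented by a map `G → ker χ` up to pointwise factors in `μ`, and `δ_χ γ` is the coboundary
`g ↦ g • a / a` of any lift `χ a = γ`.

If `γ = χ a₀ · ι b₀` with `a₀`, `b₀` invariant, pick `b₁ ^ p = b₀`; then `γ = χ (a₀ · j b₁)` and the
coboundary of `a₀ · j b₁` is `j (g • b₁ / b₁)`, a `p`-torsion value. Conversely, if the coboundary
of a lift `a` takes values in `μ`, it pulls back to a cocycle `c` in `B`; Hilbert 90 for `B` writes
`c` as the coboundary of some `b`, and then `a / j b` and `b ^ p` are invariant with
`γ = χ (a / j b) · ι (b ^ p)`. Finally a cocycle in `ker χ` is, by Hilbert 90 for `A`, the coboundary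
of some `a`, and `χ a` is then invariant.
-/

open groupCohomology

section CocycleConditions

variable {G A : Type*} [CommGroup A] [SMul G A]

theorem isMulCocycle₁_iff [Mul G] {c : G → A} :
    IsMulCocycle₁ c ↔ ∀ g h : G, c (g * h) = c g * g • c h :=
  forall₂_congr fun _ _ => by rw [mul_comm]

theorem isMulCoboundary₁_iff {c : G → A} :
    IsMulCoboundary₁ c ↔ ∃ a : A, ∀ g : G, c g = g • a * a⁻¹ :=
  exists_congr fun _ => forall_congr' fun _ => by rw [div_eq_mul_inv, eq_comm]

end CocycleConditions

section Cocycles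

variable {G A : Type*} [Monoid G] [CommGroup A] [MulDistribMulAction G A]

theorem smul_mul_inv_mul_inv_smul_mul_inv (g : G) (a m : A) :
    (g • a * a⁻¹) * (g • m * m⁻¹)⁻¹ = g • (a * m⁻¹) * (a * m⁻¹)⁻¹ := by
  simp only [smul_mul', smul_inv', mul_inv, inv_inv]
  ac_rfl

theorem isMulCocycle₁_of_injective_of_map_eq {B : Type*} [CommGroup B] [MulDistribMulAction G B]
    {j : B →* A} (hj : Function.Injective j) (hjequiv : ∀ (g : G) (b : B), j (g • b) = g • j b)
    {c : G → B} {a : A} (hc : ∀ g : G, j (c g) = g • a * a⁻¹) : IsMulCocycle₁ c := by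
  intro g h
  apply hj
  rw [map_mul, hjequiv, hc, hc, hc, mul_smul, smul_mul', smul_inv']
  group

theorem smul_mul_inv_pow_eq_one {B : Type*} [CommGroup B] [MulDistribMulAction G B]
    {p : ℕ} {g : G} {b : B} (hb : g • b ^ p = b ^ p) : (g • b * b⁻¹) ^ p = 1 := by
  rw [mul_pow, inv_pow, ← smul_pow', hb, mul_inv_cancel]

end Cocycles

section DeltaChi

variable {G A B Γs : Type*} [Monoid G] [CommGroup A] [CommGroup B] [CommGroup Γs]
  [MulDistribMulAction G A] [MulDistribMulAction G B]
  {p : ℕ} {j : B →* A} {χ : A →* Γs} {ι : B →* Γs}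

theorem exists_mem_ker_coboundary_mul_inv_mem_torsion
    (hjequiv : ∀ (g : G) (b : B), j (g • b) = g • j b) (hι : ∀ b : B, ι (b ^ p) = χ (j b))
    (hpB : ∀ b : B, ∃ b' : B, b' ^ p = b) {a₀ : A} {b₀ : B}
    (ha₀ : ∀ g : G, g • a₀ = a₀) (hb₀ : ∀ g : G, g • b₀ = b₀) {a : A}
    (ha : χ a = χ a₀ * ι b₀) :
    ∃ m : A, χ m = 1 ∧
      ∀ g : G, (g • a * a⁻¹) * (g • m * m⁻¹)⁻¹ ∈ j '' {b | b ^ p = 1} := by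
  obtain ⟨b₁, rfl⟩ := hpB b₀
  refine ⟨a * (a₀ * j b₁)⁻¹, by rw [map_mul, map_inv, map_mul, ha, ← hι, mul_inv_cancel], ?_⟩
  intro g
  rw [smul_mul_inv_mul_inv_smul_mul_inv, mul_inv_rev, inv_inv, mul_inv_cancel_comm_assoc]
  refine ⟨g • b₁ * b₁⁻¹, smul_mul_inv_pow_eq_one (hb₀ g), ?_⟩
  rw [map_mul, map_inv, hjequiv, smul_mul', ha₀ g, ← div_eq_mul_inv, ← div_eq_mul_inv,
    mul_div_mul_left_eq_div]

theorem exists_eq_map_mul_map_of_coboundary_mem_torsion (hj : Function.Injective j)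
    (hjequiv : ∀ (g : G) (b : B), j (g • b) = g • j b) (hι : ∀ b : B, ι (b ^ p) = χ (j b))
    (hH1B : ∀ c : G → B, IsMulCocycle₁ c → IsMulCoboundary₁ c) {a : A}
    (ha : ∀ g : G, g • a * a⁻¹ ∈ j '' {b | b ^ p = 1}) :
    ∃ (a₀ : A) (b₀ : B), (∀ g : G, g • a₀ = a₀) ∧ (∀ g : G, g • b₀ = b₀) ∧
      χ a = χ a₀ * ι b₀ := by
  choose c hc_pow hc using ha
  obtain ⟨b, hb⟩ := hH1B c (isMulCocycle₁_of_injective_of_map_eq hj hjequiv hc)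
  have hgb : ∀ g : G, g • b = c g * b := fun g => by rw [← hb, div_mul_cancel]
  have hga : ∀ g : G, g • a = j (c g) * a := fun g => by rw [hc, inv_mul_cancel_right]
  refine ⟨a * (j b)⁻¹, b ^ p, fun g => ?_, fun g => ?_, ?_⟩
  · rw [smul_mul', smul_inv', ← hjequiv, hga, hgb, map_mul, ← div_eq_mul_inv, ← div_eq_mul_inv,
      mul_div_mul_left_eq_div]
  · rw [smul_pow', hgb, mul_pow, hc_pow, one_mul]
  · rw [hι, map_mul, map_inv, inv_mul_cancel_right]

theorem smul_map_eq_of_coboundary_mem_ker [MulDistribMulAction G Γs]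
    (hχequiv : ∀ (g : G) (a : A), χ (g • a) = g • χ a)
    {a : A} (ha : ∀ g : G, g • a * a⁻¹ ∈ χ.ker) (g : G) : g • χ a = χ a := by
  have := ha g
  rwa [MonoidHom.mem_ker, map_mul, map_inv, mul_inv_eq_one, hχequiv] at this

end DeltaChi

theorem delta_chi_iso_onto_image_mod_mu_general
    {G A B Γs : Type*} [Group G] [CommGroup A] [CommGroup B] [CommGroup Γs]
    [MulDistribMulAction G A] [MulDistribMulAction G B] [MulDistribMulAction G Γs]
    (p : ℕ)
    (j : B →* A) (hjinj : Function.Injective j)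
    (hjequiv : ∀ (g : G) (b : B), j (g • b) = g • j b)
    (χ : A →* Γs)
    (hχequiv : ∀ (g : G) (a : A), χ (g • a) = g • χ a)
    (ι : B →* Γs)
    (hι : ∀ b : B, ι (b ^ p) = χ (j b))
    (hpB : ∀ b : B, ∃ b' : B, b' ^ p = b)      -- Kummer: p-th powers surject on k^sep*
    (hH1A : ∀ c : G → A, (∀ g h : G, c (g * h) = c g * g • c h) →
      ∃ a : A, ∀ g : G, c g = g • a * a⁻¹)      -- H^1(G, (L^sep)*) = 1  (Hilbert 90)
    (hH1B : ∀ c : G → B, (∀ g h : G, c (g * h) = c g * g • c h) →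
      ∃ b : B, ∀ g : G, c g = g • b * b⁻¹)      -- H^1(G, (k^sep)*) = 1  (Hilbert 90)
    -- μ ⊆ A denotes the image under j of the p-torsion of B (i.e. μ_p(k^sep) ⊆ M)
    (μ : Set A) (hμ : ∀ x : A, x ∈ μ ↔ ∃ b : B, b ^ p = 1 ∧ j b = x) :
    -- (i) δ_χ kills χ(A^G)·ι(B^G) in H^1(G, M/μ_p): for invariant γ = χ(a₀)·ι(b₀)
    --     with a₀, b₀ invariant, the cocycle of γ is a coboundary modulo μ
    (∀ (a₀ : A) (b₀ : B), (∀ g : G, g • a₀ = a₀) → (∀ g : G, g • b₀ = b₀) →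
      ∀ a : A, χ a = χ a₀ * ι b₀ →
        ∃ m : A, χ m = 1 ∧ ∀ g : G, (g • a * a⁻¹) * (g • m * m⁻¹)⁻¹ ∈ μ) ∧
    -- (ii) injectivity of the induced map on Γ^G/χ(A^G)ι(B^G)
    (∀ (γ : Γs) (a : A), χ a = γ → (∀ g : G, g • γ = γ) →
      (∃ m : A, χ m = 1 ∧ ∀ g : G, (g • a * a⁻¹) * (g • m * m⁻¹)⁻¹ ∈ μ) →
      ∃ (a₀ : A) (b₀ : B), (∀ g : G, g • a₀ = a₀) ∧ (∀ g : G, g • b₀ = b₀) ∧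
        γ = χ a₀ * ι b₀) ∧
    -- (iii) the image is the image of H^1(G, M) in H^1(G, M/μ_p): every cocycle with
    --       values in M = ker χ is, modulo μ and modulo M-coboundaries, the cocycle
    --       attached to some invariant γ ∈ Γ^G
    (∀ c : G → A, (∀ g : G, c g ∈ χ.ker) →
      (∀ g h : G, c (g * h) = c g * g • c h) →
      ∃ (γ : Γs) (a : A) (m : A), (∀ g : G, g • γ = γ) ∧ χ a = γ ∧ χ m = 1 ∧
        ∀ g : G, c g * ((g • a * a⁻¹) * (g • m * m⁻¹))⁻¹ ∈ μ) := by
  obtain rfl : μ = j '' {b | b ^ p = 1} := Set.ext hμ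
  refine ⟨fun a₀ b₀ ha₀ hb₀ a ha =>
    exists_mem_ker_coboundary_mul_inv_mem_torsion hjequiv hι hpB ha₀ hb₀ ha, ?_, ?_⟩
  · rintro _ a rfl - ⟨m, hm, hmem⟩
    have hχ : χ (a * m⁻¹) = χ a := by rw [map_mul, map_inv, hm, inv_one, mul_one]
    rw [← hχ]
    refine exists_eq_map_mul_map_of_coboundary_mem_torsion hjinj hjequiv hι
      (fun c hc => isMulCoboundary₁_iff.2 (hH1B c (isMulCocycle₁_iff.1 hc))) fun g => ?_
    rw [← smul_mul_inv_mul_inv_smul_mul_inv]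
    exact hmem g
  · intro c hc_ker hc
    obtain ⟨a, ha⟩ := hH1A c hc
    refine ⟨χ a, a, 1, smul_map_eq_of_coboundary_mem_ker hχequiv fun g => ha g ▸ hc_ker g, rfl,
      map_one χ, fun g => ⟨1, one_pow p, ?_⟩⟩
    rw [map_one, ha, smul_one, inv_one, mul_one, mul_one, mul_inv_cancel]

/-- Under the isomorphism `δ_χ : Γ/χ(L*) ≅ H^1(G_k, M)` (coming from the
`G`-equivariant exact sequence `1 → M → (L^sep)* →^χ Γ^sep → 1` with
`H^1(G, (L^sep)*) = 1`), the map `δ_χ` induces an isomorphism from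
`Γ/χ(L*)ι(k*)` onto the image of `H^1(G, M)` in `H^1(G, M/μ_p)`.
(The statement for `δ_p : L*/(L*)^p ≅ H^1(G, μ_p(L^sep))`, inducing an isomorphism
`L*/(L*)^p k* ≅ image of H^1(G, μ_p(L^sep)) in H^1(G, μ_p(L^sep)/μ_p)`, is the
instance of this abstract statement with `Γˢ = A`, `χ = (·)^p` and `ι = j`.)

Abstract setting: `G` acts on `A = (L^sep)*`, `B = (k^sep)*` and `Γˢ = Γ^sep`;
`j : B →* A` is the equivariant inclusion, `χ : A →* Γˢ` the equivariant surjection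
with kernel `M`, `μ_p = j(ker((·)^p : B → B)) ⊆ M`, `ι : B →* Γˢ` the equivariant map
with `ι(b^p) = χ(j b)` (concretely `ι(x) = (x, x^{deg f/p})`), `H^1(G,A)` and
`H^1(G,B)` trivial, and `p`-th powers surjective on `B` (as `k^sep` is separably
closed).  Cocycles with values in `M/μ_p` are represented by maps `G → ker χ` up to
pointwise multiplication by `μ := range of j on the p-torsion of B`:
(i)   the map `γ ↦ [g ↦ (g • a) * a⁻¹ mod μ]`, `χ a = γ`, kills `χ((A)^G)·ι((B)^G)`;
(ii)  injectivity on the quotient `Γ^G/χ(A^G)ι(B^G)`;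
(iii) its image is exactly the image of `H^1(G, M)` in `H^1(G, M/μ_p)`. -/
theorem delta_chi_iso_onto_image_mod_mu
    {G A B Γs : Type*} [Group G] [CommGroup A] [CommGroup B] [CommGroup Γs]
    [MulDistribMulAction G A] [MulDistribMulAction G B] [MulDistribMulAction G Γs]
    (p : ℕ) (hp : p.Prime)
    (j : B →* A) (hjinj : Function.Injective j)
    (hjequiv : ∀ (g : G) (b : B), j (g • b) = g • j b)
    (χ : A →* Γs) (hχsurj : Function.Surjective χ)
    (hχequiv : ∀ (g : G) (a : A), χ (g • a) = g • χ a)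
    (ι : B →* Γs) (hιequiv : ∀ (g : G) (b : B), ι (g • b) = g • ι b)
    (hι : ∀ b : B, ι (b ^ p) = χ (j b))
    (hpB : ∀ b : B, ∃ b' : B, b' ^ p = b)      -- Kummer: p-th powers surject on k^sep*
    (hH1A : ∀ c : G → A, (∀ g h : G, c (g * h) = c g * g • c h) →
      ∃ a : A, ∀ g : G, c g = g • a * a⁻¹)      -- H^1(G, (L^sep)*) = 1  (Hilbert 90)
    (hH1B : ∀ c : G → B, (∀ g h : G, c (g * h) = c g * g • c h) →
      ∃ b : B, ∀ g : G, c g = g • b * b⁻¹)      -- H^1(G, (k^sep)*) = 1  (Hilbert 90)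
    -- μ ⊆ A denotes the image under j of the p-torsion of B (i.e. μ_p(k^sep) ⊆ M)
    (μ : Set A) (hμ : ∀ x : A, x ∈ μ ↔ ∃ b : B, b ^ p = 1 ∧ j b = x) :
    -- (i) δ_χ kills χ(A^G)·ι(B^G) in H^1(G, M/μ_p): for invariant γ = χ(a₀)·ι(b₀)
    --     with a₀, b₀ invariant, the cocycle of γ is a coboundary modulo μ
    (∀ (a₀ : A) (b₀ : B), (∀ g : G, g • a₀ = a₀) → (∀ g : G, g • b₀ = b₀) →
      ∀ a : A, χ a = χ a₀ * ι b₀ →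
        ∃ m : A, χ m = 1 ∧ ∀ g : G, (g • a * a⁻¹) * (g • m * m⁻¹)⁻¹ ∈ μ) ∧
    -- (ii) injectivity of the induced map on Γ^G/χ(A^G)ι(B^G)
    (∀ (γ : Γs) (a : A), χ a = γ → (∀ g : G, g • γ = γ) →
      (∃ m : A, χ m = 1 ∧ ∀ g : G, (g • a * a⁻¹) * (g • m * m⁻¹)⁻¹ ∈ μ) →
      ∃ (a₀ : A) (b₀ : B), (∀ g : G, g • a₀ = a₀) ∧ (∀ g : G, g • b₀ = b₀) ∧
        γ = χ a₀ * ι b₀) ∧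
    -- (iii) the image is the image of H^1(G, M) in H^1(G, M/μ_p): every cocycle with
    --       values in M = ker χ is, modulo μ and modulo M-coboundaries, the cocycle
    --       attached to some invariant γ ∈ Γ^G
    (∀ c : G → A, (∀ g : G, c g ∈ χ.ker) →
      (∀ g h : G, c (g * h) = c g * g • c h) →
      ∃ (γ : Γs) (a : A) (m : A), (∀ g : G, g • γ = γ) ∧ χ a = γ ∧ χ m = 1 ∧
        ∀ g : G, c g * ((g • a * a⁻¹) * (g • m * m⁻¹))⁻¹ ∈ μ) :=
  delta_chi_iso_onto_image_mod_mu_general p j hjinj hjequiv χ hχequiv ι hι hpB hH1A hH1B μ hμ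
end

section
/- (Theorem: unfaking the fake Selmer group) Let k be a global field containing μ_p, C : y^p = f(x) as above, J its Jacobian, φ = 1 − ζ, and assume C has a k_v-rational divisor class of degree 1 for every place v. Define Sel^φ_explicit(J,k) ⊂ Γ/χ(L*)ι(k*) as the set of classes whose localization at every place v lies in the image of J(k_v)/φJ(k_v) under (x−T, y)_v. Then the connecting map δ_χ restricts to an isomorphism Sel^φ_explicit(J,k) ≅ Sel^φ(J,k), where Sel^φ(J,k) ⊂ H^1(G_k, J[φ]) is the usual Selmer group. -/
/-! The explicit Selmer group is the preimage of `Sel^φ(J, k)` under `δ_χ`: locally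
`(x - T, y)_v = δ_χᵛ⁻¹ ∘ δ_φᵛ` with `δ_χᵛ` injective, and restriction commutes with `δ_χ`.
So `δ_χ` is a bijection between them as soon as `Sel^φ(J, k)` lies in the image of `δ_χ`,
i.e. in the kernel of `δ₁ : H¹(G_k, J[φ]) → Br(k)[p]`. A Selmer class is locally in the
image of `δ_χᵛ`, hence locally in the kernel of `δ₁ᵛ`; by compatibility of `δ₁` with
restriction and the injectivity of `Br(k)[p] → ∏_v Br(k_v)[p]`, it is then in `ker δ₁`. -/

theorem Set.bijOn_preimage_of_subset_range {α β : Type*} {f : α → β} {t : Set β}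
    (hf : Function.Injective f) (ht : t ⊆ Set.range f) : Set.BijOn f (f ⁻¹' t) t := by
  simpa only [Set.image_preimage_eq_of_subset ht] using hf.injOn.bijOn_image (s := f ⁻¹' t)

theorem MonoidHom.mem_ker_of_forall_res_mem_ker {V H B : Type*} [Group H] [MulOneClass B]
    {Hv Bv : V → Type*} [∀ v, Group (Hv v)] [∀ v, MulOneClass (Bv v)]
    {δ : H →* B} {δv : ∀ v, Hv v →* Bv v} {resH : ∀ v, H →* Hv v} {resB : ∀ v, B →* Bv v}
    (hres : ∀ v ξ, δv v (resH v ξ) = resB v (δ ξ))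
    (hinj : Function.Injective fun b : B => fun v => resB v b)
    {ξ : H} (hξ : ∀ v, resH v ξ ∈ (δv v).ker) : ξ ∈ δ.ker :=
  hinj <| funext fun v => show resB v (δ ξ) = resB v 1 by
    rw [map_one, ← hres, (hξ v : δv v (resH v ξ) = 1)]

theorem explicit_selmer_iso_selmer_general
    {V : Type*}                                     -- places of the global field k
    {ΓQ H1 B : Type*} [CommGroup ΓQ] [CommGroup H1] [CommGroup B]
    (JGv ΓQv H1v Bv : V → Type*)
    [∀ v, CommGroup (JGv v)] [∀ v, CommGroup (ΓQv v)]
    [∀ v, CommGroup (H1v v)] [∀ v, CommGroup (Bv v)]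
    -- global maps
    (δχ : ΓQ →* H1) (hδχinj : Function.Injective δχ)
    (δ₁ : H1 →* B) (hexact : δχ.range = δ₁.ker)     -- im δχ = ker(H1 → Br(k)[p])
    -- local maps
    (xyv : ∀ v, JGv v →* ΓQv v)
    (δχv : ∀ v, ΓQv v →* H1v v) (hδχvinj : ∀ v, Function.Injective (δχv v))
    (δφv : ∀ v, JGv v →* H1v v) (hlocal : ∀ v z, δχv v (xyv v z) = δφv v z)
    (δ₁v : ∀ v, H1v v →* Bv v)
    (hexactv : ∀ v, (δχv v).range = (δ₁v v).ker)
    -- restriction (localization) maps and their compatibilities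
    (resΓ : ∀ v, ΓQ →* ΓQv v) (resH : ∀ v, H1 →* H1v v) (resB : ∀ v, B →* Bv v)
    (hresχ : ∀ v η, δχv v (resΓ v η) = resH v (δχ η))
    (hresB : ∀ v ξ, δ₁v v (resH v ξ) = resB v (δ₁ ξ))
    -- injectivity of Br(k)[p] → ∏_v Br(k_v)[p]
    (hBrinj : Function.Injective (fun b : B => fun v : V => resB v b)) :
    Set.BijOn δχ
      {η : ΓQ | ∀ v, resΓ v η ∈ Set.range (xyv v)}   -- Sel^φ_explicit(J, k)
      {ξ : H1 | ∀ v, resH v ξ ∈ Set.range (δφv v)}   -- Sel^φ(J, k)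
    := by
  have hrange : ∀ v, Set.range (δφv v) = δχv v '' Set.range (xyv v) := fun v => by
    rw [← Set.range_comp]
    exact congrArg Set.range (funext (hlocal v)).symm
  have hexplicit : {η : ΓQ | ∀ v, resΓ v η ∈ Set.range (xyv v)} =
      δχ ⁻¹' {ξ : H1 | ∀ v, resH v ξ ∈ Set.range (δφv v)} := by
    ext η
    simp only [Set.mem_ofPred_eq, Set.mem_preimage, hrange, ← hresχ,
      (hδχvinj _).mem_set_image]
  have hselmer : {ξ : H1 | ∀ v, resH v ξ ∈ Set.range (δφv v)} ⊆ Set.range δχ := by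
    intro ξ hξ
    have hker : ξ ∈ δ₁.ker := MonoidHom.mem_ker_of_forall_res_mem_ker hresB hBrinj fun v => by
      obtain ⟨z, hz⟩ := hξ v
      exact hexactv v ▸ ⟨xyv v z, (hlocal v z).trans hz⟩
    rwa [← hexact, MonoidHom.mem_range] at hker
  rw [hexplicit]
  exact Set.bijOn_preimage_of_subset_range hδχinj hselmer

/-- Unfaking the fake Selmer group: Let `k` be a global field
containing `μ_p`, `C : y^p = f(x)`, `J` its Jacobian, `φ = 1 - ζ`, and assume `C` has
a `k_v`-rational divisor class of degree 1 for every place `v`.  The explicit Selmer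
group `Sel^φ_explicit(J, k) ⊆ Γ/χ(L*)ι(k*)` is the set of classes whose localization
at every place `v` lies in the image of `J(k_v)/φJ(k_v)` under `(x-T, y)_v`; the usual
Selmer group `Sel^φ(J, k) ⊆ H^1(G_k, J[φ])` is the set of classes whose restriction
lies in the image of the local connecting map `δ_φᵛ` for all `v`.  Then `δ_χ`
restricts to an isomorphism (a bijection of the two subsets, and `δ_χ` is an
injective homomorphism) `Sel^φ_explicit(J, k) ≅ Sel^φ(J, k)`.

Formalization by the commutative local-global diagram of the paper:
`ΓQ = Γ/χ(L*)ι(k*)`, `H1 = H^1(G_k, J[φ])`, `B = Br(k)[p]`, with local analogues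
indexed by the places `V`; `δχ : ΓQ ↪ H1` with image `ker(δ₁ : H1 → Br(k)[p])`,
`(x-T,y) = δχ⁻¹ ∘ δφ` locally, restriction maps commute with everything, and
`Br(k)[p] → ∏_v Br(k_v)[p]` is injective. -/
theorem explicit_selmer_iso_selmer
    {V : Type*}                                     -- places of the global field k
    {JG ΓQ H1 B : Type*} [CommGroup JG] [CommGroup ΓQ] [CommGroup H1] [CommGroup B]
    (JGv ΓQv H1v Bv : V → Type*)
    [∀ v, CommGroup (JGv v)] [∀ v, CommGroup (ΓQv v)]
    [∀ v, CommGroup (H1v v)] [∀ v, CommGroup (Bv v)]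
    -- global maps
    (xy : JG →* ΓQ)                                 -- (x-T, y) : J(k)/φJ(k) → ΓQ
    (δχ : ΓQ →* H1) (hδχinj : Function.Injective δχ)
    (δφ : JG →* H1) (hglob : ∀ z, δχ (xy z) = δφ z)
    (δ₁ : H1 →* B) (hexact : δχ.range = δ₁.ker)     -- im δχ = ker(H1 → Br(k)[p])
    -- local maps
    (xyv : ∀ v, JGv v →* ΓQv v)
    (δχv : ∀ v, ΓQv v →* H1v v) (hδχvinj : ∀ v, Function.Injective (δχv v))
    (δφv : ∀ v, JGv v →* H1v v) (hlocal : ∀ v z, δχv v (xyv v z) = δφv v z)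
    (δ₁v : ∀ v, H1v v →* Bv v)
    (hexactv : ∀ v, (δχv v).range = (δ₁v v).ker)
    -- restriction (localization) maps and their compatibilities
    (resΓ : ∀ v, ΓQ →* ΓQv v) (resH : ∀ v, H1 →* H1v v) (resB : ∀ v, B →* Bv v)
    (hresχ : ∀ v η, δχv v (resΓ v η) = resH v (δχ η))
    (hresB : ∀ v ξ, δ₁v v (resH v ξ) = resB v (δ₁ ξ))
    -- injectivity of Br(k)[p] → ∏_v Br(k_v)[p]
    (hBrinj : Function.Injective (fun b : B => fun v : V => resB v b)) :
    Set.BijOn δχ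
      {η : ΓQ | ∀ v, resΓ v η ∈ Set.range (xyv v)}   -- Sel^φ_explicit(J, k)
      {ξ : H1 | ∀ v, resH v ξ ∈ Set.range (δφv v)}   -- Sel^φ(J, k)
    :=
  explicit_selmer_iso_selmer_general JGv ΓQv H1v Bv δχ hδχinj δ₁ hexact xyv δχv hδχvinj δφv hlocal
    δ₁v hexactv resΓ resH resB hresχ hresB hBrinj
end
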